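/- Let b, h be positive integers and let R, R₀ be classes in a lattice with a symmetric bilinear form satisfying the Hodge index inequality R²·R₀² ≤ (R·R₀)², with R² = 2b² − 3h, R·R₀ = 6h, R₀² = 4b² − 12h. Then 3h ≥ (2/3)·b², i.e. 9h ≥ 2b². -/
import Mathlib


/-- Corollary: the Hodge index inequality applied to the ramification divisors
`R`, `R₀` of a general triple plane forces `3h ≥ (2/3)·b²`, i.e. `9h ≥ 2b²`. -/
theorem stmt1 (b h : ℤ) (hb : 0 < b) (hh : 0 < h)
    (V : Type*) [AddCommGroup V] [Module ℤ V]
    (B : V →ₗ[ℤ] V →ₗ[ℤ] ℤ)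
    (hsymm : ∀ x y : V, B x y = B y x)
    (R R₀ : V)
    (hR2 : B R R = 2 * b ^ 2 - 3 * h)
    (hRR0 : B R R₀ = 6 * h)
    (hR02 : B R₀ R₀ = 4 * b ^ 2 - 12 * h)
    (hHodge : B R R * B R₀ R₀ ≤ (B R R₀) ^ 2) :
    2 * b ^ 2 ≤ 9 * h := by
  rw [hR2, hRR0, hR02] at hHodge
  nlinarith [sq_nonneg b, mul_pos hb hb]
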